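/- arXiv:1912.09815 — 9 statements merged into one kernel-verified Lean document; each statement's English description precedes it below -/
import Mathlib

section
/- Fix n ≥ 1 and let G := ZMod (2*n) × ⨁_ℕ ZMod n. Let V be a finite type, E ⊆ V × V × V a set of equations (a triple (x,y,z) encodes the equation x = y + z), and D ⊆ V × V a set of disequalities. Then the following are equivalent: (a) there is an assignment s : V → G satisfying E (i.e., s x = s y + s z for every (x,y,z) ∈ E) such that s x ≠ s y for every (x,y) ∈ D; (b) there is an assignment r : V → ZMod (2*n) satisfying E such that for every (x,y) ∈ D with the property that every assignment t : V → ZMod n satisfying E has t x = t y, one has r x − r y = (n : ZMod (2*n)). -/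
/-!
A solution over `ZMod (2 * n) × ⨁ ℕ, ZMod n` projects to one over `ZMod (2 * n)`. If `x` and `y`
are forced equal over `ZMod n`, every coordinate of the `⨁` part and the reduction mod `n` of the
first coordinate agree at `x` and `y`, so `s x ≠ s y` forces the first coordinates to differ by a
nonzero element of the kernel of `ZMod (2 * n) → ZMod n`, which is `n`. Conversely, the `⨁` part
has room for one `ZMod n` solution per pair of variables, separating every pair not forced equal.
-/

open DirectSum

section Solutions

variable {V : Type*}

def IsSolution {A : Type*} [Add A] (E : Set (V × V × V)) (s : V → A) : Prop :=
  ∀ p ∈ E, s p.1 = s p.2.1 + s p.2.2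

def ForcedEq (A : Type*) [Add A] (E : Set (V × V × V)) (x y : V) : Prop :=
  ∀ t : V → A, IsSolution E t → t x = t y

variable {E : Set (V × V × V)} {A B : Type*}

namespace IsSolution

theorem zero [AddZeroClass A] : IsSolution E (0 : V → A) :=
  fun _ _ => (add_zero 0).symm

theorem map [Add A] [Add B] {F : Type*} [FunLike F A B] [AddHomClass F A B] {s : V → A}
    (hs : IsSolution E s) (f : F) : IsSolution E (f ∘ s) :=
  fun p hp => by simp only [Function.comp_apply, hs p hp, map_add]

theorem prodMk [Add A] [Add B] {s : V → A} {t : V → B} (hs : IsSolution E s)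
    (ht : IsSolution E t) : IsSolution E fun v => (s v, t v) :=
  fun p hp => Prod.ext (hs p hp) (ht p hp)

end IsSolution

theorem ForcedEq.apply_eq_of_directSum {ι : Type*} [AddCommMonoid A] {x y : V}
    (hxy : ForcedEq A E x y) {s : V → ⨁ _ : ι, A} (hs : IsSolution E s) : s x = s y :=
  DFinsupp.ext fun i => hxy _ (hs.map (DFinsupp.evalAddMonoidHom i))

theorem exists_isSolution_directSum_of_family {ι κ : Type*} [Fintype ι] [DecidableEq κ]
    [AddCommMonoid A] (f : ι ↪ κ) (T : ι → V → A) (hT : ∀ i, IsSolution E (T i)) :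
    ∃ s : V → ⨁ _ : κ, A, IsSolution E s ∧ ∀ i v, s v (f i) = T i v := by
  refine ⟨fun v => ∑ i, of (fun _ => A) (f i) (T i v), fun q hq => ?_, fun i v => ?_⟩
  · simp only [(hT _) q hq, map_add, Finset.sum_add_distrib]
  · rw [DFinsupp.finsetSum_apply, Finset.sum_eq_single i]
    · exact of_eq_same _ _
    · exact fun j _ hji => of_eq_of_ne _ _ _ (f.injective.ne hji.symm)
    · exact fun h => (h (Finset.mem_univ i)).elim

theorem exists_isSolution_directSum_separating [Finite V] [AddCommMonoid A] :
    ∃ s : V → ⨁ _ : ℕ, A, IsSolution E s ∧ ∀ x y, ¬ForcedEq A E x y → s x ≠ s y := by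
  have hsep : ∀ p : V × V, ∃ t : V → A,
      IsSolution E t ∧ (¬ForcedEq A E p.1 p.2 → t p.1 ≠ t p.2) := by
    intro p
    by_cases h : ForcedEq A E p.1 p.2
    · exact ⟨0, IsSolution.zero, absurd h⟩
    · simp only [ForcedEq, not_forall] at h
      obtain ⟨t, ht, hne⟩ := h
      exact ⟨t, ht, fun _ => hne⟩
  choose T hT using hsep
  have := Fintype.ofFinite V
  obtain ⟨f⟩ : Nonempty (V × V ↪ ℕ) := nonempty_embedding_nat _
  obtain ⟨s, hs, hsT⟩ := exists_isSolution_directSum_of_family f T fun p => (hT p).1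
  refine ⟨s, hs, fun x y hxy heq => (hT (x, y)).2 hxy ?_⟩
  rw [← hsT, ← hsT, heq]

end Solutions

theorem ZMod.eq_zero_or_eq_of_castHom_eq_zero {n : ℕ} [NeZero n] {a : ZMod (2 * n)}
    (ha : ZMod.castHom (dvd_mul_left n 2) (ZMod n) a = 0) : a = 0 ∨ a = n := by
  have hdvd : n ∣ a.val := by
    rwa [ZMod.castHom_apply, ← ZMod.natCast_val, ZMod.natCast_eq_zero_iff] at ha
  obtain ⟨k, hk⟩ := hdvd
  have hk2 : k < 2 := by
    have := ZMod.val_lt a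
    nlinarith [NeZero.pos n]
  rw [← ZMod.natCast_zmod_val a, hk]
  interval_cases k <;> simp

theorem ZMod.natCast_ne_zero_two_mul {n : ℕ} [NeZero n] : (n : ZMod (2 * n)) ≠ 0 := by
  rw [Ne, ZMod.natCast_eq_zero_iff]
  have hpos := NeZero.pos n
  exact Nat.not_dvd_of_pos_of_lt hpos (by omega)

theorem fst_sub_eq_of_forcedEq {V ι : Type*} {E : Set (V × V × V)} {n : ℕ} [NeZero n]
    {s : V → ZMod (2 * n) × ⨁ _ : ι, ZMod n} (hs : IsSolution E s) {x y : V}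
    (hxy : ForcedEq (ZMod n) E x y) (hne : s x ≠ s y) : (s x).1 - (s y).1 = n := by
  have hsnd : (s x).2 = (s y).2 := hxy.apply_eq_of_directSum (hs.map (AddMonoidHom.snd _ _))
  have hcast : ZMod.castHom (dvd_mul_left n 2) (ZMod n) ((s x).1 - (s y).1) = 0 := by
    rw [map_sub, sub_eq_zero]
    exact hxy _ ((hs.map (AddMonoidHom.fst _ _)).map (ZMod.castHom _ (ZMod n)))
  rcases ZMod.eq_zero_or_eq_of_castHom_eq_zero hcast with h | h
  · exact absurd (Prod.ext (sub_eq_zero.mp h) hsnd) hne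
  · exact h

/-- Correctness of the polynomial-time algorithm for systems of linear
equations and disequalities over `ZMod (2*n) × ⨁_ℕ ZMod n`. -/
theorem stmt_2 (n : ℕ) (hn : 1 ≤ n) (V : Type) [Fintype V]
    (E : Set (V × V × V)) (D : Set (V × V)) :
    (∃ s : V → ZMod (2 * n) × DirectSum ℕ (fun _ => ZMod n),
        (∀ p ∈ E, s p.1 = s p.2.1 + s p.2.2) ∧
        (∀ p ∈ D, s p.1 ≠ s p.2))
    ↔
    (∃ r : V → ZMod (2 * n),
        (∀ p ∈ E, r p.1 = r p.2.1 + r p.2.2) ∧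
        (∀ p ∈ D,
          (∀ t : V → ZMod n, (∀ q ∈ E, t q.1 = t q.2.1 + t q.2.2) → t p.1 = t p.2) →
          r p.1 - r p.2 = (n : ZMod (2 * n)))) := by
  have : NeZero n := ⟨by omega⟩
  constructor
  · rintro ⟨s, hsE, hsD⟩
    exact ⟨fun v => (s v).1, IsSolution.map hsE (AddMonoidHom.fst _ _),
      fun p hp hforced => fst_sub_eq_of_forcedEq hsE hforced (hsD p hp)⟩
  · rintro ⟨r, hrE, hrD⟩
    obtain ⟨σ, hσE, hσ⟩ := exists_isSolution_directSum_separating (E := E) (A := ZMod n)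
    refine ⟨fun v => (r v, σ v), IsSolution.prodMk hrE hσE, fun p hp heq => ?_⟩
    by_cases hforced : ForcedEq (ZMod n) E p.1 p.2
    · have hr := hrD p hp hforced
      have hfst : r p.1 = r p.2 := congrArg Prod.fst heq
      rw [hfst, sub_self] at hr
      exact ZMod.natCast_ne_zero_two_mul hr.symm
    · exact hσ _ _ hforced (congrArg Prod.snd heq)
end

section
/- Let H and K be groups whose exponents are finite and coprime, i.e., Monoid.exponent H ≠ 0, Monoid.exponent K ≠ 0, and Nat.Coprime (Monoid.exponent H) (Monoid.exponent K). Suppose there exist a monoid homomorphism s : (Fin 6 → H × K) →* H × K (tuples with pointwise multiplication) that preserves ≠, and injective monoid endomorphisms e₁, e₂ of H × K with e₁(s(x,y,x,z,y,z)) = e₂(s(y,x,z,x,z,y)) for all x,y,z ∈ H × K. Then the same data exist for H (a monoid homomorphism (Fin 6 → H) →* H preserving ≠ together with injective endomorphisms of H satisfying the corresponding identity), and likewise for K. -/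
/-!
Choose `m ≡ 1 [MOD exponent H]` and `m ≡ 0 [MOD exponent K]` by the Chinese remainder theorem.
Then the copy `H × 1` of `H` inside `H × K` is exactly the set of solutions of `g ^ m = g`, and
monoid homomorphisms preserve solutions of this equation. So the pseudo-Siggers polymorphism of
`H × K` and both endomorphisms restrict to `H × 1 ≃* H`; for `K` swap the factors.
-/

open Function

def PreservesNe {α : Type*} {k : ℕ} (F : (Fin k → α) → α) : Prop :=
  ∀ p q : Fin k → α, (∀ i, p i ≠ q i) → F p ≠ F q

variable {M N : Type*} [Monoid M] [Monoid N]

structure IsPseudoSiggers (t : (Fin 6 → M) →* M) (a b : M →* M) : Prop where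
  preservesNe : PreservesNe t
  injective_left : Injective a
  injective_right : Injective b
  map_apply_eq : ∀ x y z : M, a (t ![x, y, x, z, y, z]) = b (t ![y, x, z, x, z, y])

def HasPseudoSiggers (M : Type*) [Monoid M] : Prop :=
  ∃ (t : (Fin 6 → M) →* M) (a b : M →* M), IsPseudoSiggers t a b

theorem MonoidHom.compLeft_vecCons (f : M →* N) {n : ℕ} (x : M) (v : Fin n → M) :
    f.compLeft (Fin (n + 1)) (Matrix.vecCons x v) = Matrix.vecCons (f x) (f.compLeft (Fin n) v) :=
  funext fun i => Fin.cases rfl (fun _ => rfl) i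

theorem MonoidHom.compLeft_vecEmpty (f : M →* N) : f.compLeft (Fin 0) ![] = ![] :=
  Subsingleton.elim _ _

theorem HasPseudoSiggers.of_mulEquiv (e : M ≃* N) (h : HasPseudoSiggers M) :
    HasPseudoSiggers N := by
  obtain ⟨t, a, b, ht, ha, hb, hid⟩ := h
  let conj (f : M →* M) : N →* N := e.toMonoidHom.comp (f.comp e.symm.toMonoidHom)
  refine ⟨e.toMonoidHom.comp (t.comp (e.symm.toMonoidHom.compLeft (Fin 6))), conj a, conj b,
    ⟨fun p q hpq hpq' => ?_, ?_, ?_, fun x y z => ?_⟩⟩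
  · exact ht _ _ (fun i => e.symm.injective.ne (hpq i)) (e.injective hpq')
  · exact e.injective.comp (ha.comp e.symm.injective)
  · exact e.injective.comp (hb.comp e.symm.injective)
  · simp only [conj, MonoidHom.comp_apply, MulEquiv.coe_toMonoidHom, MulEquiv.symm_apply_apply,
      MonoidHom.compLeft_vecCons, MonoidHom.compLeft_vecEmpty]
    exact congrArg e (hid _ _ _)

theorem IsPseudoSiggers.hasPseudoSiggers_submonoid {t : (Fin 6 → M) →* M} {a b : M →* M}
    (h : IsPseudoSiggers t a b) (S : Submonoid M)
    (htS : ∀ p : Fin 6 → M, (∀ i, p i ∈ S) → t p ∈ S)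
    (haS : ∀ x ∈ S, a x ∈ S) (hbS : ∀ x ∈ S, b x ∈ S) : HasPseudoSiggers S := by
  let restrict (f : M →* M) (hf : ∀ x ∈ S, f x ∈ S) : S →* S :=
    (f.comp S.subtype).codRestrict S fun x => hf x x.2
  refine ⟨(t.comp (S.subtype.compLeft (Fin 6))).codRestrict S fun p => htS _ fun i => (p i).2,
    restrict a haS, restrict b hbS, ⟨fun p q hpq hpq' => ?_, fun x y hxy => ?_,
    fun x y hxy => ?_, fun x y z => Subtype.ext ?_⟩⟩
  · exact h.preservesNe _ _ (fun i => Subtype.coe_injective.ne (hpq i)) (congrArg Subtype.val hpq')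
  · exact Subtype.ext (h.injective_left (congrArg Subtype.val hxy))
  · exact Subtype.ext (h.injective_right (congrArg Subtype.val hxy))
  · simp only [restrict, MonoidHom.codRestrict_apply, MonoidHom.comp_apply,
      MonoidHom.compLeft_vecCons, MonoidHom.compLeft_vecEmpty]
    exact h.map_apply_eq x y z

theorem Monoid.pow_eq_pow_of_modEq {m n : ℕ} (h : m ≡ n [MOD Monoid.exponent M]) (x : M) :
    x ^ m = x ^ n := by
  rw [Monoid.pow_eq_mod_exponent, h, ← Monoid.pow_eq_mod_exponent]

theorem MonoidHom.mem_mrange_inl_iff_pow_eq_self {m : ℕ} (h₁ : m ≡ 1 [MOD Monoid.exponent M])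
    (h₀ : m ≡ 0 [MOD Monoid.exponent N]) (g : M × N) :
    g ∈ MonoidHom.mrange (MonoidHom.inl M N) ↔ g ^ m = g := by
  rw [Submonoid.mrange_inl', Submonoid.mem_comap, Submonoid.mem_bot, Prod.pow_def,
    Monoid.pow_eq_pow_of_modEq h₁, Monoid.pow_eq_pow_of_modEq h₀, pow_one, pow_zero,
    Prod.ext_iff]
  simp only [MonoidHom.coe_snd, true_and, eq_comm]

theorem HasPseudoSiggers.fst (hcop : Nat.Coprime (Monoid.exponent M) (Monoid.exponent N))
    (h : HasPseudoSiggers (M × N)) : HasPseudoSiggers M := by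
  obtain ⟨t, a, b, ht⟩ := h
  obtain ⟨m, h₁, h₀⟩ := Nat.chineseRemainder hcop 1 0
  have hmem := MonoidHom.mem_mrange_inl_iff_pow_eq_self (M := M) (N := N) h₁ h₀
  have hmap (f : M × N →* M × N) (x) (hx : x ∈ MonoidHom.mrange (MonoidHom.inl M N)) :
      f x ∈ MonoidHom.mrange (MonoidHom.inl M N) := by
    rw [hmem] at hx ⊢
    rw [← map_pow, hx]
  refine .of_mulEquiv (MulEquiv.ofLeftInverse' (MonoidHom.inl M N) (g := Prod.fst)
    fun _ => rfl).symm (ht.hasPseudoSiggers_submonoid _ (fun p hp => ?_) (hmap a) (hmap b))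
  have hp' : p ^ m = p := funext fun i => (hmem (p i)).1 (hp i)
  rw [hmem, ← map_pow, hp']

theorem stmt_4_general (H K : Type) [Group H] [Group K]
    (hcop : Nat.Coprime (Monoid.exponent H) (Monoid.exponent K))
    (s : (Fin 6 → H × K) →* H × K)
    (hs : ∀ p q : Fin 6 → H × K, (∀ i, p i ≠ q i) → s p ≠ s q)
    (e₁ e₂ : H × K →* H × K)
    (he₁ : Function.Injective e₁) (he₂ : Function.Injective e₂)
    (hsig : ∀ x y z : H × K, e₁ (s ![x, y, x, z, y, z]) = e₂ (s ![y, x, z, x, z, y])) :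
    (∃ (t : (Fin 6 → H) →* H) (a b : H →* H),
      (∀ p q : Fin 6 → H, (∀ i, p i ≠ q i) → t p ≠ t q) ∧
      Function.Injective a ∧ Function.Injective b ∧
      (∀ x y z : H, a (t ![x, y, x, z, y, z]) = b (t ![y, x, z, x, z, y]))) ∧
    (∃ (t : (Fin 6 → K) →* K) (a b : K →* K),
      (∀ p q : Fin 6 → K, (∀ i, p i ≠ q i) → t p ≠ t q) ∧
      Function.Injective a ∧ Function.Injective b ∧
      (∀ x y z : K, a (t ![x, y, x, z, y, z]) = b (t ![y, x, z, x, z, y]))) := by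
  have hHK : HasPseudoSiggers (H × K) := ⟨s, e₁, e₂, hs, he₁, he₂, hsig⟩
  obtain ⟨t, a, b, hH⟩ := hHK.fst hcop
  obtain ⟨t', a', b', hK⟩ := (hHK.of_mulEquiv (MulEquiv.prodComm)).fst hcop.symm
  exact ⟨⟨t, a, b, hH.1, hH.2, hH.3, hH.4⟩, ⟨t', a', b', hK.1, hK.2, hK.3, hK.4⟩⟩

/-- If `H` and `K` are groups of finite coprime exponents and
`(H × K, ≠)` has a pseudo-Siggers polymorphism, then so do `(H, ≠)` and `(K, ≠)`. -/
theorem stmt_4 (H K : Type) [Group H] [Group K]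
    (hH : Monoid.exponent H ≠ 0) (hK : Monoid.exponent K ≠ 0)
    (hcop : Nat.Coprime (Monoid.exponent H) (Monoid.exponent K))
    (s : (Fin 6 → H × K) →* H × K)
    (hs : ∀ p q : Fin 6 → H × K, (∀ i, p i ≠ q i) → s p ≠ s q)
    (e₁ e₂ : H × K →* H × K)
    (he₁ : Function.Injective e₁) (he₂ : Function.Injective e₂)
    (hsig : ∀ x y z : H × K, e₁ (s ![x, y, x, z, y, z]) = e₂ (s ![y, x, z, x, z, y])) :
    (∃ (t : (Fin 6 → H) →* H) (a b : H →* H),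
      (∀ p q : Fin 6 → H, (∀ i, p i ≠ q i) → t p ≠ t q) ∧
      Function.Injective a ∧ Function.Injective b ∧
      (∀ x y z : H, a (t ![x, y, x, z, y, z]) = b (t ![y, x, z, x, z, y]))) ∧
    (∃ (t : (Fin 6 → K) →* K) (a b : K →* K),
      (∀ p q : Fin 6 → K, (∀ i, p i ≠ q i) → t p ≠ t q) ∧
      Function.Injective a ∧ Function.Injective b ∧
      (∀ x y z : K, a (t ![x, y, x, z, y, z]) = b (t ![y, x, z, x, z, y]))) :=
  stmt_4_general H K hcop s hs e₁ e₂ he₁ he₂ hsig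
end

section
/- Let M be a monoid, n ∈ ℕ, and f : (Fin n → M) →* M a monoid homomorphism (tuples with pointwise multiplication) that preserves ≠. Then for every k ∈ ℕ and every family P : Fin k → Set (Fin n) of pairwise disjoint sets whose union is all of Fin n (a partition of {1,…,n}), there exists j : Fin k such that the map M → M sending m to f (fun i => if i ∈ P j then m else 1) is injective. -/
/-!
Suppose no block gave an injective map: pick `a j ≠ b j` with `f_{P j}(a j) = f_{P j}(b j)` for
every `j`. Gluing these along the partition gives tuples `p i = a j`, `q i = b j` for `i ∈ P j`,
which differ in every coordinate. But `p` is the ordered product of the block tuples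
`(a j)_{P j}`, and `q` that of the `(b j)_{P j}`, so the homomorphism `f` takes the same value on
them. No commutativity of `M` is needed: at each coordinate exactly one factor differs from `1`.
-/

lemma List.prod_map_finRange_eq_single {M : Type*} [Monoid M] {k : ℕ} (g : Fin k → M)
    (j : Fin k) (hg : ∀ j' ≠ j, g j' = 1) : ((List.finRange k).map g).prod = g j := by
  classical
  rw [List.prod_map_eq_pow_single j g fun j' hj' _ => hg j' hj', List.count_finRange, pow_one]

lemma comp_eq_list_prod_mulIndicator {ι M : Type*} [Monoid M] {k : ℕ} {P : Fin k → Set ι}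
    (hdisj : Pairwise fun j j' => Disjoint (P j) (P j')) {σ : ι → Fin k}
    (hσ : ∀ i, i ∈ P (σ i)) (c : Fin k → M) :
    (fun i => c (σ i)) = ((List.finRange k).map fun j => (P j).mulIndicator fun _ => c j).prod := by
  funext i
  rw [Pi.list_prod_apply, List.map_map, List.prod_map_finRange_eq_single _ (σ i)]
  · exact (Set.mulIndicator_of_mem (hσ i) (fun _ => c (σ i))).symm
  · intro j hj
    exact Set.mulIndicator_of_notMem (Set.disjoint_right.mp (hdisj hj) (hσ i)) (fun _ => c j)

open Classical in
/-- For a ≠-preserving polymorphism `f` of a monoid and any partition of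
the coordinates, some block `P j` yields an injective unary map `f_{P j}`. -/
theorem stmt_5 (M : Type) [Monoid M] (n : ℕ)
    (f : (Fin n → M) →* M)
    (hf : ∀ p q : Fin n → M, (∀ i, p i ≠ q i) → f p ≠ f q)
    (k : ℕ) (P : Fin k → Set (Fin n))
    (hdisj : Pairwise fun j j' => Disjoint (P j) (P j'))
    (hcover : (⋃ j, P j) = Set.univ) :
    ∃ j : Fin k,
      Function.Injective (fun m : M => f (fun i => if i ∈ P j then m else 1)) := by
  by_contra! hnot
  choose a b hab hne using fun j => Function.not_injective_iff.mp (hnot j)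
  choose σ hσ using fun i => Set.mem_iUnion.mp (hcover ▸ Set.mem_univ i)
  refine hf (fun i => a (σ i)) (fun i => b (σ i)) (fun i => hne (σ i)) ?_
  rw [comp_eq_list_prod_mulIndicator hdisj hσ, comp_eq_list_prod_mulIndicator hdisj hσ,
    map_list_prod, map_list_prod, List.map_map, List.map_map]
  exact congrArg List.prod (List.map_congr_left fun j _ => hab j)
end

section
/- Let L be a first-order language having only function symbols and let M be an L-structure. Suppose there is a bijection e : M × M → M such that for every k-ary function symbol g of L and all x, y : Fin k → M, e (funMap g x, funMap g y) = funMap g (fun i => e (x i, y i)) (i.e., M × M with the coordinatewise structure is isomorphic to M). Then there exist a bijection s : (Fin 6 → M) → M commuting with every operation of M (for every k-ary function symbol g and every a : Fin k → (Fin 6 → M), s (fun j => funMap g (fun i => a i j)) = funMap g (fun i => s (a i))) and a bijection α : M → M commuting with every operation of M, such that α(s(x,y,x,z,y,z)) = s(y,x,z,x,z,y) for all x,y,z ∈ M. -/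
/-!
Iterating an isomorphism `M × M ≅ M` gives an isomorphism `s : M⁶ ≅ M`. Permuting coordinates
by `σ = (0 1)(2 3)(4 5)` is an automorphism of `M⁶`; transported along `s` it becomes an
automorphism `α` of `M` with `α (s v) = s (v ∘ σ)`, and `(x, y, x, z, y, z) ∘ σ = (y, x, z, x, z, y)`.
-/

open FirstOrder Language

namespace FirstOrder.Language

open Structure

variable {L : Language} {M N M' N' : Type*} [L.Structure M] [L.Structure N]
  [L.Structure M'] [L.Structure N']

instance prodStructure : L.Structure (M × N) where
  funMap g x := (funMap g (Prod.fst ∘ x), funMap g (Prod.snd ∘ x))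
  RelMap r x := RelMap r (Prod.fst ∘ x) ∧ RelMap r (Prod.snd ∘ x)

instance piStructure (ι : Type*) : L.Structure (ι → M) where
  funMap g x j := funMap g (fun i => x i j)
  RelMap r x := ∀ j, RelMap r (fun i => x i j)

theorem relMap_prod {k : ℕ} (r : L.Relations k) (x : Fin k → M × N) :
    RelMap r x ↔ RelMap r (Prod.fst ∘ x) ∧ RelMap r (Prod.snd ∘ x) :=
  Iff.rfl

theorem relMap_pi {ι : Type*} {k : ℕ} (r : L.Relations k) (x : Fin k → ι → M) :
    RelMap r x ↔ ∀ j, RelMap r (fun i => x i j) :=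
  Iff.rfl

namespace Equiv

noncomputable def ofBijective [L.IsAlgebraic] (f : M → N) (hf : Function.Bijective f)
    (hfun : ∀ {k} (g : L.Functions k) (x : Fin k → M), f (funMap g x) = funMap g (f ∘ x)) :
    M ≃[L] N where
  toEquiv := _root_.Equiv.ofBijective f hf
  map_fun' := hfun
  map_rel' r := isEmptyElim r

def prodCongr (f : M ≃[L] M') (g : N ≃[L] N') : (M × N) ≃[L] (M' × N') where
  toEquiv := f.toEquiv.prodCongr g.toEquiv
  map_fun' h _ := Prod.ext (f.map_fun h _) (g.map_fun h _)
  map_rel' r _ := and_congr (f.map_rel r _) (g.map_rel r _)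

variable (L M)

def funUnique (ι : Type*) [Unique ι] : (ι → M) ≃[L] M where
  toEquiv := _root_.Equiv.funUnique ι M
  map_fun' _ _ := rfl
  map_rel' r x := ((relMap_pi r x).trans Unique.forall_iff).symm

def piFinSucc (n : ℕ) : (Fin (n + 1) → M) ≃[L] M × (Fin n → M) where
  toEquiv := (Fin.consEquiv fun _ => M).symm
  map_fun' _ _ := rfl
  map_rel' r x := by
    rw [relMap_prod, relMap_pi, relMap_pi, Fin.forall_fin_succ]
    rfl

variable {L M}

def arrowCongrLeft {ι κ : Type*} (σ : ι ≃ κ) : (κ → M) ≃[L] (ι → M) where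
  toFun v := v ∘ σ
  invFun v := v ∘ σ.symm
  left_inv v := by ext; simp
  right_inv v := by ext; simp
  map_fun' _ _ := rfl
  map_rel' r x := by
    rw [relMap_pi, relMap_pi]
    exact (σ.surjective.forall (p := fun j => RelMap r fun i => x i j)).symm

@[simp]
theorem arrowCongrLeft_apply {ι κ : Type*} (σ : ι ≃ κ) (v : κ → M) :
    arrowCongrLeft (L := L) σ v = v ∘ σ :=
  rfl

def finFunOfProdSelf (e : (M × M) ≃[L] M) : (n : ℕ) → (Fin (n + 1) → M) ≃[L] M
  | 0 => funUnique L M (Fin 1)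
  | n + 1 => e.comp (((refl L M).prodCongr (finFunOfProdSelf e n)).comp (piFinSucc L M (n + 1)))

end Equiv

end FirstOrder.Language

/-- An algebra (structure in a purely functional language) isomorphic to its
own square has a pseudo-Siggers polymorphism witnessed by an automorphism. -/
theorem stmt_8 (L : FirstOrder.Language) [L.IsAlgebraic]
    (M : Type) [L.Structure M]
    (e : M × M → M) (he : Function.Bijective e)
    (hcompat : ∀ (k : ℕ) (g : L.Functions k) (x y : Fin k → M),
      e (Structure.funMap g x, Structure.funMap g y) =
        Structure.funMap g (fun i => e (x i, y i))) :
    ∃ (s : (Fin 6 → M) → M) (α : M → M),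
      Function.Bijective s ∧ Function.Bijective α ∧
      (∀ (k : ℕ) (g : L.Functions k) (a : Fin k → (Fin 6 → M)),
        s (fun j => Structure.funMap g (fun i => a i j)) =
          Structure.funMap g (fun i => s (a i))) ∧
      (∀ (k : ℕ) (g : L.Functions k) (a : Fin k → M),
        α (Structure.funMap g a) = Structure.funMap g (fun i => α (a i))) ∧
      (∀ x y z : M, α (s ![x, y, x, z, y, z]) = s ![y, x, z, x, z, y]) := by
  let s : (Fin 6 → M) ≃[L] M :=
    Equiv.finFunOfProdSelf (Language.Equiv.ofBijective e he fun g _ => hcompat _ g _ _) 5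
  let σ : Equiv.Perm (Fin 6) := Equiv.swap 0 1 * Equiv.swap 2 3 * Equiv.swap 4 5
  let α : M ≃[L] M := s.comp ((Equiv.arrowCongrLeft σ).comp s.symm)
  refine ⟨s, α, s.bijective, α.bijective, fun _ g a => s.map_fun g a,
    fun _ g a => α.map_fun g a, fun x y z => ?_⟩
  have hσ : ![x, y, x, z, y, z] ∘ σ = ![y, x, z, x, z, y] := by
    ext j; fin_cases j <;> rfl
  simp [α, hσ]
end

section
/- Let p be a prime and let G be a countable abelian group of finite exponent in which every element has order a power of p. Then there exists an injective additive group homomorphism G × G →+ G if and only if there exists n ∈ ℕ such that G is bi-embeddable with ⨁_ℕ ZMod (p^n). -/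
/-!
Let `p ^ n` be the exponent of `G`. Any countable group `A` of exponent dividing `N` embeds
in `⨁_ℕ ZMod N`: `ZMod N` is the `N`-torsion of the divisible group `ℝ/ℤ`, hence injective among
groups of exponent dividing `N`, so for `H_k = ⟨x_0, …, x_{k-1}⟩` (with `x` enumerating `A`) there
is a character `χ_k : A → ZMod N` killing `H_k` and injective on the cyclic group `H_{k+1}/H_k`;
then `a ↦ (χ_k a)_k` is finitely supported and injective.

Conversely, if `G × G` embeds in `G` then so does `V × V` for `V = p^{n-1} G`, an `𝔽_p`-vector
space which is nontrivial by minimality of `n`, hence infinite. Lifting an infinite independent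
family of `V` to `G` gives a map `⨁_ℕ ZMod (p^n) → G` which is injective on the socle
`p^{n-1} (⨁_ℕ ZMod (p^n))`, hence injective. Finally `⨁_ℕ M × ⨁_ℕ M ≅ ⨁_ℕ M`, which gives
the converse implication.
-/

open Function AddSubgroup

theorem exists_pow_nsmul_eq_zero_of_addOrderOf_eq_pow {G : Type*} [AddCommGroup G] {p k : ℕ}
    (hp : p.Prime) (hk : k ≠ 0) (hkG : ∀ x : G, k • x = 0)
    (hord : ∀ x : G, ∃ e, addOrderOf x = p ^ e) :
    ∃ n, ∀ x : G, p ^ n • x = 0 := by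
  refine ⟨k.factorization p, fun x => ?_⟩
  obtain ⟨e, he⟩ := hord x
  rw [← addOrderOf_dvd_iff_nsmul_eq_zero, he]
  refine pow_dvd_pow p ((hp.pow_dvd_iff_le_factorization hk).1 ?_)
  rw [← he]
  exact addOrderOf_dvd_of_nsmul_eq_zero (hkG x)

namespace ZMod

variable {N : ℕ} [NeZero N]

theorem exists_toAddCircle_eq {x : UnitAddCircle} (hx : N • x = 0) :
    ∃ j : ZMod N, toAddCircle j = x := by
  induction x using QuotientAddGroup.induction_on with | H t => ?_
  rw [← AddCircle.coe_nsmul, AddCircle.coe_eq_zero_iff] at hx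
  obtain ⟨m, hm⟩ := hx
  refine ⟨m, ?_⟩
  have hN : (N : ℝ) ≠ 0 := Nat.cast_ne_zero.2 (NeZero.ne N)
  rw [toAddCircle_intCast]
  congr 1
  rw [zsmul_one, nsmul_eq_mul] at hm
  field_simp
  linarith

theorem exists_toAddCircle_comp_eq {A : Type*} [AddCommGroup A] (hA : ∀ a : A, N • a = 0)
    (χ : A →+ UnitAddCircle) : ∃ ψ : A →+ ZMod N, toAddCircle.comp ψ = χ := by
  choose ψ hψ using fun a => exists_toAddCircle_eq (by rw [← map_nsmul, hA, map_zero] : N • χ a = 0)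
  refine ⟨{ toFun := ψ, map_zero' := ?_, map_add' := fun a b => ?_ }, AddMonoidHom.ext hψ⟩
  · exact toAddCircle_injective N (by rw [hψ, map_zero, map_zero])
  · exact toAddCircle_injective N (by rw [map_add, hψ, hψ, hψ, map_add])

end ZMod

theorem exists_zmod_disjoint_ker_zmultiples {A : Type*} [AddCommGroup A] {N : ℕ} [NeZero N]
    (hA : ∀ a : A, N • a = 0) (a : A) :
    ∃ ψ : A →+ ZMod N, Disjoint ψ.ker (zmultiples a) := by
  have : NeZero (addOrderOf a) := ⟨(addOrderOf_pos_iff.2 (isOfFinAddOrder_iff_nsmul_eq_zero.2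
    ⟨N, Nat.pos_of_ne_zero (NeZero.ne N), hA a⟩)).ne'⟩
  have hgen : ∀ b : zmultiples a, b ∈ zmultiples ⟨a, mem_zmultiples a⟩ := by
    rintro ⟨_, t, rfl⟩
    exact ⟨t, rfl⟩
  let θ : zmultiples a →+ UnitAddCircle :=
    ZMod.toAddCircle.comp (zmodAddEquivOfGenerator hgen (Nat.card_zmultiples a)).symm.toAddMonoidHom
  have hθ : Injective θ := (ZMod.toAddCircle_injective _).comp (AddEquiv.injective _)
  obtain ⟨χ, hχ⟩ := (Module.Baer.of_divisible UnitAddCircle).extension_property_addMonoidHom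
    (zmultiples a).subtype (subtype_injective _) θ
  obtain ⟨ψ, rfl⟩ := ZMod.exists_toAddCircle_comp_eq hA χ
  refine ⟨ψ, disjoint_def.2 fun {b} hψ hb => ?_⟩
  have : θ ⟨b, hb⟩ = θ 0 := by
    rw [← hχ, map_zero]
    simpa using hψ
  exact congrArg Subtype.val (hθ this)

theorem exists_zmod_ker_sup_zmultiples {A : Type*} [AddCommGroup A] {N : ℕ} [NeZero N]
    (hA : ∀ a : A, N • a = 0) (H : AddSubgroup A) (x : A) :
    ∃ χ : A →+ ZMod N, H ≤ χ.ker ∧ ∀ g ∈ H ⊔ zmultiples x, χ g = 0 → g ∈ H := by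
  have hQ : ∀ q : A ⧸ H, N • q = 0 := by
    rintro ⟨a⟩
    exact congrArg QuotientAddGroup.mk (hA a)
  obtain ⟨ψ, hψ⟩ := exists_zmod_disjoint_ker_zmultiples hQ (x : A ⧸ H)
  refine ⟨ψ.comp (QuotientAddGroup.mk' H), fun h hh => ?_, fun g hg hχ => ?_⟩
  · simp [(QuotientAddGroup.eq_zero_iff h).2 hh]
  · obtain ⟨h, hh, _, ⟨t, rfl⟩, rfl⟩ := mem_sup.1 hg
    have hmk : ((h + t • x : A) : A ⧸ H) = t • (x : A ⧸ H) := by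
      simp [(QuotientAddGroup.eq_zero_iff h).2 hh]
    rw [← QuotientAddGroup.eq_zero_iff, hmk]
    refine disjoint_def.1 hψ ?_ ⟨t, rfl⟩
    rwa [AddMonoidHom.mem_ker, ← hmk]

theorem exists_injective_finsupp_of_filtration {A M : Type*} [AddCommGroup A] [AddCommGroup M]
    (H : ℕ → AddSubgroup A) (hmono : Monotone H) (hbot : H 0 = ⊥) (hexh : ∀ a, ∃ k, a ∈ H k)
    (χ : ℕ → A →+ M) (hker : ∀ k, H k ≤ (χ k).ker)
    (hsep : ∀ k, ∀ a ∈ H (k + 1), χ k a = 0 → a ∈ H k) :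
    ∃ f : A →+ (ℕ →₀ M), Injective f := by
  have hfin : ∀ a, (support fun k => χ k a).Finite := by
    intro a
    obtain ⟨K, hK⟩ := hexh a
    refine (Set.finite_Iio K).subset fun k hk => ?_
    by_contra hKk
    exact hk (hker k (hmono (not_lt.1 hKk) hK))
  let f : A →+ (ℕ →₀ M) :=
    { toFun := fun a => Finsupp.ofSupportFinite _ (hfin a)
      map_zero' := by ext; simp [Finsupp.ofSupportFinite_coe]
      map_add' := fun a b => by ext; simp [Finsupp.ofSupportFinite_coe] }
  refine ⟨f, (injective_iff_map_eq_zero f).2 fun a ha => ?_⟩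
  have hχ : ∀ k, χ k a = 0 := fun k => by
    simpa [f, Finsupp.ofSupportFinite_coe] using DFunLike.congr_fun ha k
  obtain ⟨K, hK⟩ := hexh a
  have : a ∈ H 0 := by
    induction K with
    | zero => exact hK
    | succ k ih => exact ih (hsep k a hK (hχ k))
  rwa [hbot, mem_bot] at this

theorem exists_injective_finsupp_zmod_of_countable {A : Type*} [AddCommGroup A] [Countable A]
    {N : ℕ} [NeZero N] (hA : ∀ a : A, N • a = 0) :
    ∃ f : A →+ (ℕ →₀ ZMod N), Injective f := by
  obtain ⟨x, hx⟩ := exists_surjective_nat A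
  let H : ℕ → AddSubgroup A := fun k => closure (x '' Set.Iio k)
  have hsucc : ∀ k, H (k + 1) ≤ H k ⊔ zmultiples (x k) := by
    refine fun k => (closure_le _).2 ?_
    rintro _ ⟨j, hj, rfl⟩
    rcases (Nat.lt_succ_iff_lt_or_eq.1 hj) with hjk | rfl
    · exact mem_sup_left (subset_closure ⟨j, hjk, rfl⟩)
    · exact mem_sup_right (mem_zmultiples _)
  choose χ hker hsep using fun k => exists_zmod_ker_sup_zmultiples hA (H k) (x k)
  refine exists_injective_finsupp_of_filtration H ?_ ?_ ?_ χ hker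
    fun k a ha => hsep k a (hsucc k ha)
  · exact fun j k hjk => closure_mono (Set.image_mono (Set.Iio_subset_Iio hjk))
  · simp [H]
  · intro a
    obtain ⟨j, rfl⟩ := hx a
    exact ⟨j + 1, subset_closure ⟨j, j.lt_succ_self, rfl⟩⟩

theorem injective_of_eq_zero_of_nsmul_eq_zero {A B : Type*} [AddCommGroup A] [AddCommGroup B]
    (f : A →+ B) {d m : ℕ} (hA : ∀ a : A, d ^ m • a = 0)
    (hf : ∀ a, d • a = 0 → f a = 0 → a = 0) : Injective f := by
  refine (injective_iff_map_eq_zero f).2 fun a ha => ?_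
  suffices ∀ k, ∀ a : A, d ^ k • a = 0 → f a = 0 → a = 0 from this m a (hA a) ha
  intro k
  induction k with
  | zero => simp
  | succ k ih =>
    intro a hk ha
    rw [pow_succ, mul_smul] at hk
    exact hf a (ih _ hk (by rw [map_nsmul, ha, smul_zero])) ha

namespace ZMod

variable {p n : ℕ} [NeZero p]

theorem eq_pow_mul_val_div {r : ZMod (p ^ (n + 1))}
    (hr : (p : ZMod (p ^ (n + 1))) * r = 0) :
    r = p ^ n * ((r.val / p ^ n : ℕ) : ZMod (p ^ (n + 1))) := by
  have hdvd : p * p ^ n ∣ p * r.val := by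
    rw [← pow_succ', ← natCast_eq_zero_iff]
    push_cast
    rwa [natCast_zmod_val]
  have hval := Nat.mul_div_cancel' (Nat.dvd_of_mul_dvd_mul_left (NeZero.pos p) hdvd)
  conv_lhs => rw [← natCast_zmod_val r, ← hval]
  push_cast
  rfl

theorem pow_mul_eq_zero_of_cast_eq_zero {r : ZMod (p ^ (n + 1))}
    (hr : (r.cast : ZMod p) = 0) : (p ^ n : ZMod (p ^ (n + 1))) * r = 0 := by
  rw [← natCast_zmod_val r, cast_natCast (dvd_pow_self p n.succ_ne_zero),
    natCast_eq_zero_iff] at hr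
  obtain ⟨s, hs⟩ := hr
  rw [← natCast_zmod_val r, hs]
  exact_mod_cast (natCast_eq_zero_iff _ _).2
    (by rw [← mul_assoc, ← pow_succ]; exact dvd_mul_right _ _)

end ZMod

section Socle

variable {ι : Type*} {p n : ℕ} [NeZero p]

theorem Finsupp.exists_eq_pow_smul_of_smul_eq_zero {a : ι →₀ ZMod (p ^ (n + 1))} (ha : p • a = 0) :
    ∃ c : ι →₀ ZMod (p ^ (n + 1)), a = p ^ n • c := by
  refine ⟨a.mapRange (fun r => ((r.val / p ^ n : ℕ) : ZMod (p ^ (n + 1)))) (by simp), ?_⟩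
  ext i
  have hi : (p : ZMod (p ^ (n + 1))) * a i = 0 := by
    simpa [nsmul_eq_mul] using DFunLike.congr_fun ha i
  simpa [nsmul_eq_mul] using ZMod.eq_pow_mul_val_div hi

theorem injective_of_linearIndependent_pow_smul {G V : Type*} [AddCommGroup G] [AddCommGroup V]
    [Module (ZMod p) V] (Φ : (ι →₀ ZMod (p ^ (n + 1))) →+ G) (j : V →+ G) (hj : Injective j)
    (b : ι → V) (hb : LinearIndependent (ZMod p) b)
    (hΦ : ∀ i, p ^ n • Φ (Finsupp.single i 1) = j (b i)) : Injective Φ := by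
  let ρ : ZMod (p ^ (n + 1)) →+* ZMod p := ZMod.castHom (dvd_pow_self p n.succ_ne_zero) _
  let L := j.comp (Finsupp.linearCombination (ZMod p) b).toAddMonoidHom
  have hL : Injective L := hj.comp hb
  have hsocle : ∀ c, Φ (p ^ n • c) = L (c.mapRange ρ (map_zero ρ)) := by
    suffices Φ.comp (nsmulAddMonoidHom (p ^ n)) =
        L.comp (Finsupp.mapRange.addMonoidHom ρ.toAddMonoidHom) from DFunLike.congr_fun this
    refine Finsupp.addHom_ext fun i r => ?_
    obtain ⟨k, rfl⟩ := ZMod.natCast_zmod_surjective r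
    have hk : Finsupp.single i (k : ZMod (p ^ (n + 1))) = k • Finsupp.single i 1 := by
      rw [Finsupp.smul_single, nsmul_one]
    simp only [L, AddMonoidHom.comp_apply, nsmulAddMonoidHom_apply,
      Finsupp.mapRange.addMonoidHom_apply, Finsupp.mapRange_single, RingHom.toAddMonoidHom_eq_coe,
      AddMonoidHom.coe_coe, LinearMap.toAddMonoidHom_coe]
    rw [hk, map_nsmul Φ, map_nsmul Φ, smul_comm, hΦ, map_natCast ρ,
      Finsupp.linearCombination_single, Nat.cast_smul_eq_nsmul, map_nsmul j]
  refine injective_of_eq_zero_of_nsmul_eq_zero Φ (d := p) (m := n + 1) (fun a => ?_)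
    fun a ha hΦa => ?_
  · ext i
    simp [nsmul_eq_mul]
  · obtain ⟨c, rfl⟩ := Finsupp.exists_eq_pow_smul_of_smul_eq_zero ha
    rw [hsocle, map_eq_zero_iff L hL] at hΦa
    ext i
    simpa [nsmul_eq_mul] using ZMod.pow_mul_eq_zero_of_cast_eq_zero (DFunLike.congr_fun hΦa i)

end Socle

theorem Infinite.of_injective_prod {α : Type*} [Nontrivial α] (f : α × α → α) (hf : Injective f) :
    Infinite α := by
  by_contra hfin
  rw [not_infinite_iff_finite] at hfin
  have hcard := Nat.card_le_card_of_injective f hf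
  rw [Nat.card_prod] at hcard
  have := Finite.one_lt_card (α := α)
  nlinarith

theorem exists_injective_finsupp_of_injective_prod {G : Type*} [AddCommGroup G] {p n : ℕ}
    [Fact p.Prime] (hexp : ∀ x : G, p ^ (n + 1) • x = 0) (hn : ∃ x : G, p ^ n • x ≠ 0)
    (φ : G × G →+ G) (hφ : Injective φ) :
    ∃ Φ : (ℕ →₀ ZMod (p ^ (n + 1))) →+ G, Injective Φ := by
  let V := (nsmulAddMonoidHom (α := G) (p ^ n)).range
  have _ : Module (ZMod p) V := AddCommGroup.zmodModule (n := p) <| by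
    rintro ⟨_, x, rfl⟩
    ext
    simp [smul_smul, ← pow_succ', hexp]
  have : Nontrivial V := by
    obtain ⟨x, hx⟩ := hn
    exact nontrivial_of_ne ⟨_, x, rfl⟩ 0 (by simpa [Subtype.ext_iff] using hx)
  have hφV : ∀ vw : V × V, φ (vw.1, vw.2) ∈ V := by
    rintro ⟨⟨_, a, rfl⟩, ⟨_, b, rfl⟩⟩
    exact ⟨φ (a, b), by rw [nsmulAddMonoidHom_apply, ← map_nsmul, Prod.smul_mk]; rfl⟩
  have : Infinite V := Infinite.of_injective_prod (fun vw => ⟨φ (vw.1, vw.2), hφV vw⟩) <| by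
    rintro ⟨v, w⟩ ⟨v', w'⟩ h
    obtain ⟨h₁, h₂⟩ := Prod.mk.inj (hφ (congrArg Subtype.val h))
    exact Prod.ext (Subtype.ext h₁) (Subtype.ext h₂)
  let b := Module.Basis.ofVectorSpace (ZMod p) V
  have : Infinite (Module.Basis.ofVectorSpaceIndex (ZMod p) V) := by
    by_contra hfin
    rw [not_infinite_iff_finite] at hfin
    have := Finite.of_equiv _ b.equivFun.symm.toEquiv
    exact not_finite V
  obtain ⟨e⟩ : Nonempty (ℕ ↪ Module.Basis.ofVectorSpaceIndex (ZMod p) V) :=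
    ⟨Infinite.natEmbedding _⟩
  choose y hy using fun i : ℕ => (b (e i)).2
  have _ := AddCommGroup.zmodModule hexp
  refine ⟨(Finsupp.linearCombination (ZMod (p ^ (n + 1))) y).toAddMonoidHom,
    injective_of_linearIndependent_pow_smul _ V.subtype (subtype_injective V) (b ∘ e)
      (b.linearIndependent.comp e e.injective) fun i => ?_⟩
  simpa using hy i

theorem exists_injective_prod_of_finsupp {G M : Type*} [AddCommGroup G] [AddCommGroup M]
    (f : G →+ (ℕ →₀ M)) (hf : Injective f) (g : (ℕ →₀ M) →+ G) (hg : Injective g) :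
    ∃ φ : G × G →+ G, Injective φ := by
  let ψ : (ℕ →₀ M) × (ℕ →₀ M) ≃+ (ℕ →₀ M) :=
    Finsupp.sumFinsuppAddEquivProdFinsupp.symm.trans (Finsupp.domCongr Equiv.natSumNatEquivNat)
  exact ⟨g.comp (ψ.toAddMonoidHom.comp (f.prodMap f)), hg.comp (ψ.injective.comp (hf.prodMap hf))⟩

/-- A countable abelian `p`-group `G` of finite exponent satisfies
`G × G ↪ G` iff `G` is bi-embeddable with `⨁_ℕ ZMod (p^n)` for some `n`. -/
theorem stmt_9 (p : ℕ) (hp : p.Prime) (G : Type) [AddCommGroup G] [Countable G]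
    (hexp : ∃ k : ℕ, 1 ≤ k ∧ ∀ x : G, k • x = 0)
    (hord : ∀ x : G, ∃ k : ℕ, addOrderOf x = p ^ k) :
    (∃ φ : G × G →+ G, Function.Injective φ) ↔
    (∃ n : ℕ,
      (∃ f : G →+ DirectSum ℕ (fun _ => ZMod (p ^ n)), Function.Injective f) ∧
      (∃ g : DirectSum ℕ (fun _ => ZMod (p ^ n)) →+ G, Function.Injective g)) := by
  have := Fact.mk hp
  let e : ∀ n, (ℕ →₀ ZMod (p ^ n)) ≃+ DirectSum ℕ (fun _ => ZMod (p ^ n)) :=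
    fun _ => finsuppAddEquivDFinsupp
  constructor
  · rintro ⟨φ, hφ⟩
    obtain ⟨k, hk, hkG⟩ := hexp
    have hbdd := exists_pow_nsmul_eq_zero_of_addOrderOf_eq_pow hp (by omega) hkG hord
    classical
    obtain ⟨n, hn, hmin⟩ : ∃ n, (∀ x : G, p ^ n • x = 0) ∧ ∀ m < n, ∃ x : G, p ^ m • x ≠ 0 :=
      ⟨_, Nat.find_spec hbdd, fun m hm => by simpa using Nat.find_min hbdd hm⟩
    obtain ⟨f, hf⟩ := exists_injective_finsupp_zmod_of_countable hn
    obtain ⟨g, hg⟩ : ∃ g : (ℕ →₀ ZMod (p ^ n)) →+ G, Injective g := by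
      cases n with
      | zero =>
        have : Subsingleton (ZMod (p ^ 0)) := by rw [pow_zero]; infer_instance
        exact ⟨0, injective_of_subsingleton _⟩
      | succ n => exact exists_injective_finsupp_of_injective_prod hn (hmin n n.lt_succ_self) φ hφ
    exact ⟨n, ⟨(e n).toAddMonoidHom.comp f, (e n).injective.comp hf⟩,
      ⟨g.comp (e n).symm.toAddMonoidHom, hg.comp (e n).symm.injective⟩⟩
  · rintro ⟨n, ⟨f, hf⟩, ⟨g, hg⟩⟩
    exact exists_injective_prod_of_finsupp ((e n).symm.toAddMonoidHom.comp f)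
      ((e n).symm.injective.comp hf) (g.comp (e n).toAddMonoidHom) (hg.comp (e n).injective)
end

section
/- Let ι be a countable type and n : ι → ℕ with 1 ≤ n j for all j and with n bounded above (there is k with n j ≤ k for all j). Let G := ⨁_{j ∈ ι} ZMod (2 ^ n j) (the direct sum DirectSum ι (fun j => ZMod (2 ^ n j))). Let x ∈ G with x ≠ 0 and x + x = 0. Then there exists j₀ ∈ ι such that the quotient G ⧸ AddSubgroup.zmultiples x is isomorphic as an additive group to ZMod (2 ^ (n j₀ - 1)) × ⨁_{j ∈ ι, j ≠ j₀} ZMod (2 ^ n j). -/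
/-!
Pick `j₀` in the support of `x` with `n j₀` minimal. Every nonzero coordinate of the involution
`x` is the element `2 ^ (n j - 1)` of order two, so `x = 2 ^ (n j₀ - 1) • y`, where `y` has
coordinate `1` at `j₀`, coordinate `2 ^ (n j - n j₀)` elsewhere on the support of `x`, and order
`2 ^ n j₀` by minimality. The shear `g ↦ g + (g j₀) • (y - of j₀ 1)` is an automorphism sending
`of j₀ 1` to `y`; after it `x` becomes `2 ^ (n j₀ - 1)` in the summand `ZMod (2 ^ n j₀)`, and
the quotient only cuts that summand down to `ZMod (2 ^ (n j₀ - 1))`.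
-/

open AddSubgroup DirectSum

theorem Nat.eq_zero_or_eq_two_pow_pred_of_two_pow_dvd_two_mul {m v : ℕ} (hdvd : 2 ^ m ∣ 2 * v)
    (hlt : v < 2 ^ m) : v = 0 ∨ v = 2 ^ (m - 1) := by
  cases m with
  | zero => omega
  | succ m =>
    obtain ⟨c, hc⟩ := hdvd
    rw [pow_succ] at hc hlt
    have hc2 : c < 2 := by nlinarith
    interval_cases c <;> simp only [add_tsub_cancel_right] <;> omega

namespace ZMod

theorem eq_zero_or_eq_two_pow_pred_of_add_self_eq_zero {m : ℕ} {a : ZMod (2 ^ m)}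
    (h : a + a = 0) : a = 0 ∨ a = 2 ^ (m - 1) := by
  have hdvd : 2 ^ m ∣ 2 * a.val := by
    rw [← natCast_eq_zero_iff, Nat.cast_mul, natCast_zmod_val, Nat.cast_two, two_mul, h]
  rw [← natCast_zmod_val a]
  rcases Nat.eq_zero_or_eq_two_pow_pred_of_two_pow_dvd_two_mul hdvd a.val_lt with h0 | h1
  · simp [h0]
  · simp [h1]

theorem ker_castHom {N d : ℕ} (hd : d ∣ N) :
    (castHom hd (ZMod d)).toAddMonoidHom.ker = zmultiples (d : ZMod N) := by
  ext a
  rw [AddMonoidHom.mem_ker, mem_zmultiples_iff]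
  constructor
  · obtain ⟨k, rfl⟩ := intCast_surjective a
    intro hk
    obtain ⟨t, rfl⟩ := (intCast_zmod_eq_zero_iff_dvd k d).mp (by simpa using hk)
    exact ⟨t, by push_cast; rw [zsmul_eq_mul, mul_comm]⟩
  · rintro ⟨t, rfl⟩
    rw [map_zsmul, RingHom.toAddMonoidHom_eq_coe, AddMonoidHom.coe_coe, map_natCast,
      natCast_self, smul_zero]

noncomputable def quotientZMultiplesNatCastEquiv {N d : ℕ} (hd : d ∣ N) :
    (ZMod N ⧸ zmultiples (d : ZMod N)) ≃+ ZMod d :=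
  (QuotientAddGroup.quotientAddEquivOfEq (ker_castHom hd)).symm.trans
    (QuotientAddGroup.quotientKerEquivOfSurjective _ (castHom_surjective hd))

end ZMod

section Quotient

variable {A B : Type*}

theorem AddSubgroup.zmultiples_prod_zero [AddGroup A] [AddGroup B] (a : A) :
    zmultiples (a, (0 : B)) = (zmultiples a).prod ⊥ := by
  ext ⟨p, q⟩
  simp [mem_zmultiples_iff, AddSubgroup.mem_prod, eq_comm]

variable [AddCommGroup A] [AddCommGroup B]

noncomputable def QuotientAddGroup.prodZMultiplesZeroEquiv (a : A) :
    ((A × B) ⧸ zmultiples (a, (0 : B))) ≃+ (A ⧸ zmultiples a) × B :=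
  (quotientAddEquivOfEq (zmultiples_prod_zero a)).trans
    ((prodAddEquiv _ _).trans ((AddEquiv.refl _).prodCongr quotientBot))

def AddEquiv.quotientZMultiplesCongr (e : A ≃+ B) {a : A} {b : B} (h : e a = b) :
    (A ⧸ zmultiples a) ≃+ (B ⧸ zmultiples b) :=
  QuotientAddGroup.congr _ _ e (by rw [AddMonoidHom.map_zmultiples]; exact congrArg zmultiples h)

end Quotient

def AddEquiv.shear {G A : Type*} [AddCommGroup G] [AddGroup A] (f : G →+ A) (ψ : A →+ G)
    (h : ∀ a, f (ψ a) = 0) : G ≃+ G where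
  toFun g := g + ψ (f g)
  invFun g := g - ψ (f g)
  left_inv g := by simp [h]
  right_inv g := by simp [h]
  map_add' g g' := by simp only [map_add]; abel

namespace DirectSum

variable {ι : Type*}

theorem exists_two_pow_pred_smul_eq_of_add_self_eq_zero {n : ι → ℕ} {x : ⨁ j, ZMod (2 ^ n j)}
    (hx2 : x + x = 0) {j₀ : ι} (hj₀ : x j₀ ≠ 0) (hmin : ∀ j, x j ≠ 0 → n j₀ ≤ n j) :
    ∃ y : ⨁ j, ZMod (2 ^ n j), y j₀ = 1 ∧ 2 ^ n j₀ • y = 0 ∧ 2 ^ (n j₀ - 1) • y = x := by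
  have hpos : n j₀ ≠ 0 := by
    intro h
    have : Subsingleton (ZMod (2 ^ n j₀)) := ZMod.subsingleton_iff.mpr (by rw [h, pow_zero])
    exact hj₀ (Subsingleton.elim _ _)
  have hxj : ∀ j, x j ≠ 0 → x j = 2 ^ (n j - 1) := fun j hj =>
    (ZMod.eq_zero_or_eq_two_pow_pred_of_add_self_eq_zero
      (by rw [← add_apply, hx2, zero_apply])).resolve_left hj
  have hsmul : ∀ j k, 2 ^ k • (2 ^ (n j - n j₀) : ZMod (2 ^ n j)) = 2 ^ (k + (n j - n j₀)) := by
    intro j k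
    rw [nsmul_eq_mul, Nat.cast_pow, Nat.cast_ofNat, pow_add]
  refine ⟨DFinsupp.mapRange (fun j (v : ZMod (2 ^ n j)) => if v = 0 then 0 else 2 ^ (n j - n j₀))
    (fun j => if_pos rfl) x, ?_, ?_, ?_⟩
  · simp [hj₀]
  · ext j
    by_cases hj : x j = 0
    · simp [smul_apply, hj]
    · simp only [smul_apply, DFinsupp.mapRange_apply, if_neg hj, hsmul]
      rw [Nat.add_sub_of_le (hmin j hj)]
      exact_mod_cast ZMod.natCast_self (2 ^ n j)
  · ext j
    by_cases hj : x j = 0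
    · simp [smul_apply, hj]
    · rw [smul_apply, DFinsupp.mapRange_apply, if_neg hj, hsmul, hxj j hj]
      congr 1
      have := hmin j hj
      omega

variable [DecidableEq ι]

noncomputable def addEquivProdDirectSumNe (β : ι → Type*) [∀ j, AddCommMonoid (β j)] (j₀ : ι) :
    (⨁ j, β j) ≃+ β j₀ × ⨁ j : {j // j ≠ j₀}, β j :=
  (equivCongrLeft (Equiv.optionSubtypeNe j₀).symm).trans addEquivProdDirectSum

theorem addEquivProdDirectSumNe_of_self (β : ι → Type*) [∀ j, AddCommMonoid (β j)] (j₀ : ι)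
    (a : β j₀) : addEquivProdDirectSumNe β j₀ (of β j₀ a) = (a, 0) := by
  refine Prod.ext ?_ (DFinsupp.ext fun j => ?_)
  · exact of_eq_same j₀ a
  · exact of_eq_of_ne _ _ _ (by simpa using j.2)

theorem exists_addEquiv_of_apply_eq_one {N : ι → ℕ} {j₀ : ι} {y : ⨁ j, ZMod (N j)}
    (hy : y j₀ = 1) (hNy : N j₀ • y = 0) :
    ∃ φ : (⨁ j, ZMod (N j)) ≃+ (⨁ j, ZMod (N j)), φ (of _ j₀ 1) = y := by
  set z := y - of _ j₀ 1
  have hNz : zmultiplesHom _ z (N j₀) = 0 := by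
    rw [zmultiplesHom_apply, natCast_zsmul, smul_sub, hNy, ← of_smul, nsmul_eq_mul, mul_one,
      ZMod.natCast_self, map_zero, sub_zero]
  set ψ := ZMod.lift (N j₀) ⟨zmultiplesHom _ z, hNz⟩
  have hψ : ∀ k : ℤ, ψ k = k • z := fun k => ZMod.lift_coe _ _ k
  have hψ₀ : ∀ c, ψ c j₀ = 0 := by
    intro c
    obtain ⟨k, rfl⟩ := ZMod.intCast_surjective c
    rw [hψ, DFinsupp.smul_apply, sub_apply, hy, of_eq_same, sub_self, smul_zero]
  refine ⟨AddEquiv.shear (DFinsupp.evalAddMonoidHom j₀) ψ hψ₀, ?_⟩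
  change of _ j₀ 1 + ψ ((of _ j₀ 1 : ⨁ j, ZMod (N j)) j₀) = y
  have hψ₁ : ψ 1 = z := by simpa using hψ 1
  rw [of_eq_same, hψ₁]
  exact add_sub_cancel _ _

end DirectSum

theorem stmt_10_general (ι : Type) (n : ι → ℕ)
    (x : DirectSum ι (fun j => ZMod (2 ^ n j)))
    (hx : x ≠ 0) (hx2 : x + x = 0) :
    ∃ j₀ : ι,
      Nonempty
        ((DirectSum ι (fun j => ZMod (2 ^ n j)) ⧸ AddSubgroup.zmultiples x) ≃+
          (ZMod (2 ^ (n j₀ - 1)) ×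
            DirectSum {j : ι // j ≠ j₀} (fun j => ZMod (2 ^ n j.1)))) := by
  classical
  have hsupp : {j | x j ≠ 0}.Nonempty := by
    by_contra! h
    exact hx (DirectSum.ext fun j => by_contra fun hj => h.subset hj)
  obtain ⟨j₀, hj₀, hmin⟩ : ∃ j₀, x j₀ ≠ 0 ∧ ∀ j, x j ≠ 0 → n j₀ ≤ n j :=
    ⟨_, Function.argminOn_mem n _ hsupp, fun j hj => Function.argminOn_le n _ hj⟩
  obtain ⟨y, hy₀, hy_ord, hyx⟩ := exists_two_pow_pred_smul_eq_of_add_self_eq_zero hx2 hj₀ hmin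
  obtain ⟨φ, hφ⟩ := exists_addEquiv_of_apply_eq_one hy₀ hy_ord
  set e := φ.symm.trans (addEquivProdDirectSumNe _ j₀)
  have hex : e x = (((2 ^ (n j₀ - 1) : ℕ) : ZMod (2 ^ n j₀)), 0) := by
    rw [← hyx, map_nsmul, AddEquiv.trans_apply, ← hφ, AddEquiv.symm_apply_apply,
      addEquivProdDirectSumNe_of_self, Prod.smul_mk, nsmul_one, smul_zero]
  exact ⟨j₀, ⟨(e.quotientZMultiplesCongr hex).trans <|
    (QuotientAddGroup.prodZMultiplesZeroEquiv _).trans <|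
      (ZMod.quotientZMultiplesNatCastEquiv (pow_dvd_pow 2 (Nat.sub_le _ _))).prodCongr
        (AddEquiv.refl _)⟩⟩

/-- The quotient of a countable abelian 2-group of finite exponent
`⨁_{j ∈ ι} ZMod (2 ^ n j)` by the subgroup generated by an involution `x`. -/
theorem stmt_10 (ι : Type) [Countable ι] (n : ι → ℕ)
    (hn : ∀ j, 1 ≤ n j) (hbd : ∃ k : ℕ, ∀ j, n j ≤ k)
    (x : DirectSum ι (fun j => ZMod (2 ^ n j)))
    (hx : x ≠ 0) (hx2 : x + x = 0) :
    ∃ j₀ : ι,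
      Nonempty
        ((DirectSum ι (fun j => ZMod (2 ^ n j)) ⧸ AddSubgroup.zmultiples x) ≃+
          (ZMod (2 ^ (n j₀ - 1)) ×
            DirectSum {j : ι // j ≠ j₀} (fun j => ZMod (2 ^ n j.1)))) :=
  stmt_10_general ι n x hx hx2
end

section
/- Let n ≥ 1 and let G := (⨁_ℕ ZMod n) × ZMod (2*n). Then there exist an additive group homomorphism f : (Fin 6 → G) →+ G (tuples with pointwise addition) that preserves ≠, and an additive group automorphism α : G ≃+ G, such that α(f(x,y,x,z,y,z)) = f(y,x,z,x,z,y) for all x,y,z ∈ G. In particular, ((⨁_ℕ ZMod n) × ZMod (2*n), ≠) has a pseudo-Siggers polymorphism. -/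
/-!
The automorphism `rotate` permutes the coordinates of `⨁_ℕ ZMod n` within the blocks
`{3i, 3i + 1, 3i + 2}`, so it has order three, and for any endomorphism `embed` the map
`p ↦ embed (p 0) + rotate (embed (p 3)) + rotate² (embed (p 4))` satisfies the pseudo-Siggers
identity. We take `embed (a, b) = (A, b)`, where `A` stores `a` and `b mod n` in the coordinates
`3i`, so that `rotate^k (embed g)` stores them in the coordinates `3i + k`. If the map vanishes at
a tuple with nonzero entries `u, v, w` at positions `0, 3, 4`, each of them lies in the kernel
`{0, (0, n)}` of `(a, b) ↦ (a, b mod n)`; hence `u = v = w = (0, n)`, whose sum `(0, 3n) = (0, n)`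
is nonzero. Additivity turns this into preservation of `≠`.
-/

open DirectSum

namespace DirectSum

variable {ι κ M : Type*} [DecidableEq ι] [DecidableEq κ] [AddCommMonoid M]

def shift (g : ι → κ) : (⨁ _ : ι, M) →+ ⨁ _ : κ, M :=
  toAddMonoid fun i => of (fun _ => M) (g i)

@[simp] lemma shift_of (g : ι → κ) (i : ι) (m : M) :
    shift g (of (fun _ => M) i m) = of (fun _ => M) (g i) m :=
  toAddMonoid_of _ _ _

lemma shift_shift {ν : Type*} [DecidableEq ν] (g : κ → ν) (h : ι → κ) (a : ⨁ _ : ι, M) :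
    shift g (shift h a) = shift (g ∘ h) a := by
  induction a using DirectSum.induction_on <;> simp_all

lemma shift_id (a : ⨁ _ : ι, M) : shift id a = a := by
  induction a using DirectSum.induction_on <;> simp_all

lemma shift_apply_self {g : ι → κ} (hg : g.Injective) (a : ⨁ _ : ι, M) (i : ι) :
    shift g a (g i) = a i := by
  induction a using DirectSum.induction_on with
  | zero => simp
  | of j m =>
    by_cases h : j = i
    · subst h; simp [of_eq_same]
    · rw [shift_of, of_eq_of_ne _ _ _ (hg.ne (Ne.symm h)), of_eq_of_ne _ _ _ (Ne.symm h)]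
  | add x y hx hy => simp_all [add_apply]

lemma shift_apply_of_notMem_range {g : ι → κ} {k : κ} (hk : k ∉ Set.range g)
    (a : ⨁ _ : ι, M) : shift g a k = 0 := by
  induction a using DirectSum.induction_on with
  | zero => simp
  | of j m => rw [shift_of]; exact of_eq_of_ne _ _ _ fun h => hk ⟨j, h.symm⟩
  | add x y hx hy => simp_all [add_apply]

def shiftEquiv (σ : ι ≃ κ) : (⨁ _ : ι, M) ≃+ ⨁ _ : κ, M where
  toFun := shift σ
  invFun := shift σ.symm
  left_inv a := by simp [shift_shift, shift_id]
  right_inv a := by simp [shift_shift, shift_id]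
  map_add' := map_add _

end DirectSum

lemma AddMonoidHom.map_ne_map_of_forall_ne {ι G H : Type*} [AddGroup G] [AddGroup H]
    {F : (ι → G) →+ H} (hF : ∀ p, F p = 0 → ∃ i, p i = 0) {p q : ι → G}
    (hpq : ∀ i, p i ≠ q i) : F p ≠ F q := by
  intro h
  obtain ⟨i, hi⟩ := hF (p - q) (by rw [map_sub, h, sub_self])
  exact hpq i (sub_eq_zero.1 hi)

namespace PseudoSiggers

section Identity

variable {G : Type*} [AddCommGroup G]

def siggersMap (α : G ≃+ G) (e : G →+ G) : (Fin 6 → G) →+ G :=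
  e.comp (Pi.evalAddMonoidHom _ 0) + (α.toAddMonoidHom.comp e).comp (Pi.evalAddMonoidHom _ 3)
    + ((α.toAddMonoidHom.comp α.toAddMonoidHom).comp e).comp (Pi.evalAddMonoidHom _ 4)

lemma siggersMap_apply (α : G ≃+ G) (e : G →+ G) (p : Fin 6 → G) :
    siggersMap α e p = e (p 0) + α (e (p 3)) + α (α (e (p 4))) := rfl

lemma apply_siggersMap {α : G ≃+ G} (hα : ∀ x, α (α (α x)) = x) (e : G →+ G) (x y z : G) :
    α (siggersMap α e ![x, y, x, z, y, z]) = siggersMap α e ![y, x, z, x, z, y] := by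
  simp only [siggersMap_apply, Matrix.cons_val_zero, Matrix.cons_val, map_add, hα]
  abel

end Identity

lemma natCast_add_self_eq_zero (n : ℕ) : (n + n : ZMod (2 * n)) = 0 := by
  rw [← two_mul]; exact_mod_cast ZMod.natCast_self (2 * n)

lemma eq_zero_or_eq_of_castHom_eq_zero {n : ℕ} {b : ZMod (2 * n)}
    (h : ZMod.castHom (dvd_mul_left n 2) (ZMod n) b = 0) : b = 0 ∨ b = n := by
  obtain ⟨k, rfl⟩ := ZMod.intCast_surjective b
  rw [map_intCast, ZMod.intCast_zmod_eq_zero_iff_dvd] at h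
  obtain ⟨m, rfl⟩ := h
  obtain ⟨j, rfl | rfl⟩ := Int.even_or_odd' m
  · left; push_cast; linear_combination (j : ZMod (2 * n)) * natCast_add_self_eq_zero n
  · right; push_cast; linear_combination (j : ZMod (2 * n)) * natCast_add_self_eq_zero n

def block (r i : ℕ) : ℕ := 3 * i + r

lemma shift_block_apply_block {M : Type*} [AddCommMonoid M] {r s : ℕ} (hr : r < 3) (hs : s < 3)
    (a : ⨁ _ : ℕ, M) (i : ℕ) : shift (block r) a (block s i) = if r = s then a i else 0 := by
  split_ifs with h
  · subst h; exact shift_apply_self (fun j j' h => by simp only [block] at h; omega) a i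
  · exact shift_apply_of_notMem_range (by rintro ⟨j, hj⟩; simp only [block] at hj; omega) a

lemma eq_zero_of_shift_block_add_eq_zero {M : Type*} [AddCommMonoid M] {x y z : ⨁ _ : ℕ, M}
    (h : shift (block 0) x + shift (block 1) y + shift (block 2) z = 0) :
    x = 0 ∧ y = 0 ∧ z = 0 := by
  refine ⟨?_, ?_, ?_⟩ <;> ext i
  · simpa [shift_block_apply_block] using congrArg (· (block 0 i)) h
  · simpa [shift_block_apply_block] using congrArg (· (block 1 i)) h
  · simpa [shift_block_apply_block] using congrArg (· (block 2 i)) h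

def rot : Equiv.Perm ℕ where
  toFun k := 3 * (k / 3) + (k + 1) % 3
  invFun k := 3 * (k / 3) + (k + 2) % 3
  left_inv k := by dsimp only; omega
  right_inv k := by dsimp only; omega

lemma rot_comp_block_zero : rot ∘ block 0 = block 1 := by
  funext i; simp only [Function.comp, rot, block, Equiv.coe_fn_mk]; omega

lemma rot_comp_block_one : rot ∘ block 1 = block 2 := by
  funext i; simp only [Function.comp, rot, block, Equiv.coe_fn_mk]; omega

lemma rot_rot_rot (k : ℕ) : rot (rot (rot k)) = k := by
  simp only [rot, Equiv.coe_fn_mk]; omega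

variable (n : ℕ)

abbrev G := (⨁ _ : ℕ, ZMod n) × ZMod (2 * n)

def encode : G n →+ ⨁ _ : ℕ, ZMod n :=
  (of _ 0).comp ((ZMod.castHom (dvd_mul_left n 2) (ZMod n)).toAddMonoidHom.comp
    (AddMonoidHom.snd _ _)) + (shift Nat.succ).comp (AddMonoidHom.fst _ _)

def embed : G n →+ G n := ((shift (block 0)).comp (encode n)).prod (AddMonoidHom.snd _ _)

def rotate : G n ≃+ G n := (shiftEquiv rot).prodCongr (AddEquiv.refl _)

variable {n}

lemma encode_eq_zero {g : G n} (h : encode n g = 0) : g = 0 ∨ g = (0, (n : ZMod (2 * n))) := by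
  have hfst : g.1 = 0 := by
    ext i
    simpa [encode, shift_apply_self Nat.succ_injective, of_eq_of_ne] using congrArg (· (i + 1)) h
  have hsnd : ZMod.castHom (dvd_mul_left n 2) (ZMod n) g.2 = 0 := by
    simpa [encode, shift_apply_of_notMem_range (g := Nat.succ) (k := 0) (by simp)]
      using congrArg (· 0) h
  rcases eq_zero_or_eq_of_castHom_eq_zero hsnd with h2 | h2
  · exact .inl (Prod.ext hfst h2)
  · exact .inr (Prod.ext hfst h2)

lemma rotate_apply (x : G n) : rotate n x = (shift rot x.1, x.2) := rfl

lemma rotate_rotate_rotate (x : G n) : rotate n (rotate n (rotate n x)) = x := by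
  have h : rot ∘ rot ∘ rot = id := funext rot_rot_rot
  simp only [rotate_apply, shift_shift, h, shift_id]

lemma siggersMap_rotate_embed_apply (p : Fin 6 → G n) :
    siggersMap (rotate n) (embed n) p =
      (shift (block 0) (encode n (p 0)) + shift (block 1) (encode n (p 3))
        + shift (block 2) (encode n (p 4)), (p 0).2 + (p 3).2 + (p 4).2) := by
  simp only [siggersMap_apply, embed, rotate_apply, AddMonoidHom.prod_apply,
    AddMonoidHom.coe_comp, Function.comp_apply, AddMonoidHom.coe_snd, shift_shift,
    rot_comp_block_zero, rot_comp_block_one, Prod.mk_add_mk]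

lemma exists_eq_zero_of_siggersMap_eq_zero {p : Fin 6 → G n}
    (h : siggersMap (rotate n) (embed n) p = 0) : ∃ i, p i = 0 := by
  by_contra! hp
  rw [siggersMap_rotate_embed_apply, Prod.mk_eq_zero] at h
  obtain ⟨h0, h3, h4⟩ := eq_zero_of_shift_block_add_eq_zero h.1
  have hp0 := (encode_eq_zero h0).resolve_left (hp 0)
  have hp3 := (encode_eq_zero h3).resolve_left (hp 3)
  have hp4 := (encode_eq_zero h4).resolve_left (hp 4)
  have hn : (n : ZMod (2 * n)) ≠ 0 := fun hn => hp 0 (by rw [hp0, hn]; rfl)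
  have h3n : (n + n + n : ZMod (2 * n)) = 0 := by simpa only [hp0, hp3, hp4] using h.2
  exact hn (by linear_combination h3n - natCast_add_self_eq_zero n)

end PseudoSiggers

theorem stmt_12_general (n : ℕ) :
    ∃ (f : (Fin 6 → (DirectSum ℕ (fun _ => ZMod n)) × ZMod (2 * n)) →+
            (DirectSum ℕ (fun _ => ZMod n)) × ZMod (2 * n))
      (α : (DirectSum ℕ (fun _ => ZMod n)) × ZMod (2 * n) ≃+
            (DirectSum ℕ (fun _ => ZMod n)) × ZMod (2 * n)),
      (∀ p q : Fin 6 → (DirectSum ℕ (fun _ => ZMod n)) × ZMod (2 * n),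
        (∀ i, p i ≠ q i) → f p ≠ f q) ∧
      (∀ x y z : (DirectSum ℕ (fun _ => ZMod n)) × ZMod (2 * n),
        α (f ![x, y, x, z, y, z]) = f ![y, x, z, x, z, y]) :=
  ⟨PseudoSiggers.siggersMap (PseudoSiggers.rotate n) (PseudoSiggers.embed n),
    PseudoSiggers.rotate n,
    fun _ _ => AddMonoidHom.map_ne_map_of_forall_ne fun _ =>
      PseudoSiggers.exists_eq_zero_of_siggersMap_eq_zero,
    PseudoSiggers.apply_siggersMap PseudoSiggers.rotate_rotate_rotate (PseudoSiggers.embed n)⟩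

/-- For `n ≥ 1`, the group `(⨁_ℕ ZMod n) × ZMod (2*n)` with `≠` has a
pseudo-Siggers polymorphism, witnessed by an automorphism. -/
theorem stmt_12 (n : ℕ) (hn : 1 ≤ n) :
    ∃ (f : (Fin 6 → (DirectSum ℕ (fun _ => ZMod n)) × ZMod (2 * n)) →+
            (DirectSum ℕ (fun _ => ZMod n)) × ZMod (2 * n))
      (α : (DirectSum ℕ (fun _ => ZMod n)) × ZMod (2 * n) ≃+
            (DirectSum ℕ (fun _ => ZMod n)) × ZMod (2 * n)),
      (∀ p q : Fin 6 → (DirectSum ℕ (fun _ => ZMod n)) × ZMod (2 * n),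
        (∀ i, p i ≠ q i) → f p ≠ f q) ∧
      (∀ x y z : (DirectSum ℕ (fun _ => ZMod n)) × ZMod (2 * n),
        α (f ![x, y, x, z, y, z]) = f ![y, x, z, x, z, y]) :=
  stmt_12_general n
end

section
/- The class of finite semilattices has the amalgamation property: if A, B, C are finite semilattices (types with SemilatticeInf and Fintype instances), and f : A → B, g : A → C are injective maps satisfying f (a ⊓ a') = f a ⊓ f a' and g (a ⊓ a') = g a ⊓ g a' for all a, a' ∈ A, then there exist a finite semilattice D (a type with SemilatticeInf and Fintype instances) and injective maps h : B → D, k : C → D, each preserving ⊓, such that h (f a) = k (g a) for all a ∈ A. -/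
/-!
Embed `B` and `C` into `Set B × Set C` by
`b ↦ (Iic b, ↓ g (f⁻¹ (Iic b)))` and `c ↦ (↓ f (g⁻¹ (Iic c)), Iic c)`.
Both coordinates turn `⊓` into `∩`: the transferred set is an intersection because `f⁻¹ (Iic b)`
is closed under `⊓`. Since `f` and `g` are order embeddings, at `b = f a` the transferred set
is `Iic (g a)`, so the two embeddings agree on `A`.
-/

open Set

variable {A B C : Type*} [SemilatticeInf A] [SemilatticeInf B] [SemilatticeInf C]

theorem le_iff_le_of_injective_of_map_inf {f : A → B} (hf : Function.Injective f)
    (hf' : ∀ a a' : A, f (a ⊓ a') = f a ⊓ f a') {a a' : A} : f a ≤ f a' ↔ a ≤ a' := by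
  rw [← inf_eq_left, ← hf', hf.eq_iff, inf_eq_left]

theorem monotone_of_map_inf {g : A → C} (hg' : ∀ a a' : A, g (a ⊓ a') = g a ⊓ g a') :
    Monotone g := fun a a' h => by
  rw [← inf_eq_left.mpr h, hg']
  exact inf_le_right

def transfer (f : A → B) (g : A → C) (b : B) : Set C :=
  {c | ∃ a, f a ≤ b ∧ c ≤ g a}

theorem transfer_inf {f : A → B} {g : A → C} (hf' : ∀ a a' : A, f (a ⊓ a') = f a ⊓ f a')
    (hg' : ∀ a a' : A, g (a ⊓ a') = g a ⊓ g a') (b b' : B) :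
    transfer f g (b ⊓ b') = transfer f g b ∩ transfer f g b' := by
  ext c
  constructor
  · rintro ⟨a, hab, hca⟩
    exact ⟨⟨a, hab.trans inf_le_left, hca⟩, ⟨a, hab.trans inf_le_right, hca⟩⟩
  · rintro ⟨⟨a, hab, hca⟩, ⟨a', hab', hca'⟩⟩
    refine ⟨a ⊓ a', ?_, ?_⟩
    · rw [hf']
      exact inf_le_inf hab hab'
    · rw [hg']
      exact le_inf hca hca'

theorem transfer_apply {f : A → B} {g : A → C} (hf : Function.Injective f)
    (hf' : ∀ a a' : A, f (a ⊓ a') = f a ⊓ f a') (hg' : ∀ a a' : A, g (a ⊓ a') = g a ⊓ g a')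
    (a : A) : transfer f g (f a) = Iic (g a) := by
  ext c
  constructor
  · rintro ⟨a', ha', hca'⟩
    exact hca'.trans
      (monotone_of_map_inf hg' ((le_iff_le_of_injective_of_map_inf hf hf').mp ha'))
  · intro hca
    exact ⟨a, le_rfl, hca⟩

theorem stmt_15_general (A B C : Type)
    [SemilatticeInf A] [SemilatticeInf B] [Fintype B]
    [SemilatticeInf C] [Fintype C]
    (f : A → B) (g : A → C)
    (hf : Function.Injective f) (hg : Function.Injective g)
    (hf' : ∀ a a' : A, f (a ⊓ a') = f a ⊓ f a')
    (hg' : ∀ a a' : A, g (a ⊓ a') = g a ⊓ g a') :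
    ∃ (D : Type) (instD : SemilatticeInf D) (_ : Fintype D),
      letI := instD
      ∃ (h : B → D) (k : C → D),
        Function.Injective h ∧ Function.Injective k ∧
        (∀ b b' : B, h (b ⊓ b') = h b ⊓ h b') ∧
        (∀ c c' : C, k (c ⊓ c') = k c ⊓ k c') ∧
        (∀ a : A, h (f a) = k (g a)) := by
  refine ⟨Set B × Set C, inferInstance, inferInstance,
    fun b => (Iic b, transfer f g b), fun c => (transfer g f c, Iic c),
    fun b b' h => Iic_injective (congrArg Prod.fst h),
    fun c c' h => Iic_injective (congrArg Prod.snd h),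
    fun b b' => Prod.ext Iic_inter_Iic.symm (transfer_inf hf' hg' b b'),
    fun c c' => Prod.ext (transfer_inf hg' hf' c c') Iic_inter_Iic.symm,
    fun a => Prod.ext ?_ ?_⟩
  · exact (transfer_apply hg hg' hf' a).symm
  · exact transfer_apply hf hf' hg' a

/-- The class of finite semilattices has the amalgamation property. -/
theorem stmt_15 (A B C : Type)
    [SemilatticeInf A] [Fintype A] [SemilatticeInf B] [Fintype B]
    [SemilatticeInf C] [Fintype C]
    (f : A → B) (g : A → C)
    (hf : Function.Injective f) (hg : Function.Injective g)
    (hf' : ∀ a a' : A, f (a ⊓ a') = f a ⊓ f a')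
    (hg' : ∀ a a' : A, g (a ⊓ a') = g a ⊓ g a') :
    ∃ (D : Type) (instD : SemilatticeInf D) (_ : Fintype D),
      letI := instD
      ∃ (h : B → D) (k : C → D),
        Function.Injective h ∧ Function.Injective k ∧
        (∀ b b' : B, h (b ⊓ b') = h b ⊓ h b') ∧
        (∀ c c' : C, k (c ⊓ c') = k c ⊓ k c') ∧
        (∀ a : A, h (f a) = k (g a)) :=
  stmt_15_general A B C f g hf hg hf' hg'
end

section
/- Let T be a semilattice (a type with a SemilatticeInf instance) and let f : (Fin 6 → T) → T be a map that preserves pointwise ⊓ (f (p ⊓ q) = f p ⊓ f q for all tuples p, q, where (p ⊓ q) i = p i ⊓ q i), preserves ≠, and satisfies condition (†). Suppose T contains elements x, y, z, w, u, v with x < y, x < z, y < w, z < w, y < u, y < v, u < w, v < w, y ⊓ z = x, and u ⊓ v = y. Then there exist a, b, c ∈ T with a < b and b < c such that f(b,a,b,a,a,a) ≠ f(c,a,c,a,a,a) or f(a,b,a,a,b,a) ≠ f(a,c,a,a,c,a). -/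
/-!
Suppose, for a contradiction, that `f` does not separate `(b,a,b,a,a,a)` from `(c,a,c,a,a,a)`,
nor `(a,b,a,a,b,a)` from `(a,c,a,a,c,a)`, whenever `a < b < c`. Since `f` preserves `⊓`, each
diamond `b ⊓ c = a` below `d` then collapses: `f` takes the same value on the constant tuple `a`
and on the tuple built from `a` and `d`. Applying this to the two diamonds `(x; y, z; w)` and
`(y; u, v; w)`, moving between the two patterns with (†), and meeting with suitable tuples gives
`f(x,x,z,y,x,x) = f(x,x,x,x,x,x) = f(y,z,x,x,z,y)`, although the two outer tuples differ in
every coordinate.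
-/

namespace Matrix

variable {α : Type*} [Min α] {n : ℕ}

@[simp]
theorem empty_inf_empty (v w : Fin 0 → α) : v ⊓ w = ![] := empty_eq _

@[simp]
theorem cons_inf_cons (x : α) (v : Fin n → α) (y : α) (w : Fin n → α) :
    vecCons x v ⊓ vecCons y w = vecCons (x ⊓ y) (v ⊓ w) := by
  ext i
  refine i.cases ?_ ?_ <;> simp

end Matrix

section InfPreserving

variable {α β : Type*} [SemilatticeInf α] [SemilatticeInf β] {g : α → β}

theorem map_inf_eq_of_map_eq (hg : ∀ a b, g (a ⊓ b) = g a ⊓ g b) {a b c : α}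
    (ha : g a = g c) (hb : g b = g c) : g (a ⊓ b) = g c := by
  rw [hg, ha, hb, inf_idem]

theorem map_inf_congr (hg : ∀ a b, g (a ⊓ b) = g a ⊓ g b) {a b : α} (h : g a = g b)
    (c : α) : g (a ⊓ c) = g (b ⊓ c) := by
  rw [hg, hg, h]

end InfPreserving

section DoubleDiamond

variable {T β : Type*} [SemilatticeInf T]

structure IsDiamond (a b c d : T) : Prop where
  bot_lt_left : a < b
  bot_lt_right : a < c
  left_lt_top : b < d
  right_lt_top : c < d
  inf_eq_bot : b ⊓ c = a

def FlatOnChains (f : (Fin 6 → T) → β) : Prop :=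
  ∀ a b c : T, a < b → b < c →
    f ![b, a, b, a, a, a] = f ![c, a, c, a, a, a] ∧ f ![a, b, a, a, b, a] = f ![a, c, a, a, c, a]

def SatisfiesDagger (f : (Fin 6 → T) → β) : Prop :=
  ∀ x y z u v w : T, f ![x, y, x, z, y, z] = f ![u, v, u, w, v, w] ↔
    f ![y, x, z, x, z, y] = f ![v, u, w, u, w, v]

variable [SemilatticeInf β] {f : (Fin 6 → T) → β} {a b c d : T}

theorem FlatOnChains.map_const_eq_first (hinf : ∀ p q, f (p ⊓ q) = f p ⊓ f q)
    (hf : FlatOnChains f) (h : IsDiamond a b c d) :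
    f ![a, a, a, a, a, a] = f ![d, a, d, a, a, a] := by
  simpa [h.inf_eq_bot] using map_inf_eq_of_map_eq hinf
    (hf a b d h.bot_lt_left h.left_lt_top).1 (hf a c d h.bot_lt_right h.right_lt_top).1

theorem FlatOnChains.map_const_eq_second (hinf : ∀ p q, f (p ⊓ q) = f p ⊓ f q)
    (hf : FlatOnChains f) (h : IsDiamond a b c d) :
    f ![a, a, a, a, a, a] = f ![a, d, a, a, d, a] := by
  simpa [h.inf_eq_bot] using map_inf_eq_of_map_eq hinf
    (hf a b d h.bot_lt_left h.left_lt_top).2 (hf a c d h.bot_lt_right h.right_lt_top).2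

variable {x y z w u v : T}

theorem FlatOnChains.map_const_eq_left (hinf : ∀ p q, f (p ⊓ q) = f p ⊓ f q)
    (hdagger : SatisfiesDagger f)
    (hf : FlatOnChains f) (h₁ : IsDiamond x y z w) (h₂ : IsDiamond y u v w) :
    f ![x, x, x, x, x, x] = f ![x, x, z, y, x, x] := by
  have hx : f ![x, x, x, x, x, x] = f ![x, w, x, w, x, x] :=
    (hdagger x x x w x x).mp (hf.map_const_eq_first hinf h₁)
  have hy : f ![y, y, y, y, y, y] = f ![w, y, w, y, y, y] := hf.map_const_eq_first hinf h₂
  obtain ⟨hxy, -, hyw, hzw, hyz⟩ := h₁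
  have hxw := hxy.trans hyw
  calc f ![x, x, x, x, x, x] = f ![x, x, x, y, x, x] := by
        simpa [hxy.le, hyw.le, hzw.le, hxw.le, hyz] using
          map_inf_congr hinf hx ![x, x, x, y, x, x]
    _ = f ![x, x, z, y, x, x] := by
        simpa [hxy.le, hyw.le, hzw.le, hxw.le, hyz] using
          map_inf_congr hinf hy ![x, x, z, w, x, x]

theorem FlatOnChains.map_const_eq_right (hinf : ∀ p q, f (p ⊓ q) = f p ⊓ f q)
    (hdagger : SatisfiesDagger f)
    (hf : FlatOnChains f) (h₁ : IsDiamond x y z w) (h₂ : IsDiamond y u v w) :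
    f ![x, x, x, x, x, x] = f ![y, z, x, x, z, y] := by
  have hx : f ![x, x, x, x, x, x] = f ![w, x, x, x, x, w] :=
    (hdagger x x x x w x).mp (hf.map_const_eq_second hinf h₁)
  have hy : f ![y, y, y, y, y, y] = f ![y, w, y, y, w, y] := hf.map_const_eq_second hinf h₂
  obtain ⟨hxy, -, hyw, hzw, hyz⟩ := h₁
  have hxw := hxy.trans hyw
  calc f ![x, x, x, x, x, x] = f ![y, x, x, x, x, y] := by
        simpa [hxy.le, hyw.le, hzw.le, hxw.le, hyz] using
          map_inf_congr hinf hx ![y, x, x, x, x, y]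
    _ = f ![y, z, x, x, z, y] := by
        simpa [hxy.le, hyw.le, hzw.le, hxw.le, hyz] using
          map_inf_congr hinf hy ![w, z, x, x, z, w]

end DoubleDiamond

/-- Claim 2 in the proof of the semilattice dichotomy: if a semilattice
contains a copy of the two double-diamond configuration and `f` is a ≠-preserving,
⊓-preserving map satisfying condition (†), then there exist `a < b < c` with
`f(b,a,b,a,a,a) ≠ f(c,a,c,a,a,a)` or `f(a,b,a,a,b,a) ≠ f(a,c,a,a,c,a)`. -/
theorem stmt_18 (T : Type) [SemilatticeInf T]
    (f : (Fin 6 → T) → T)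
    (hinf : ∀ p q : Fin 6 → T, f (p ⊓ q) = f p ⊓ f q)
    (hne : ∀ p q : Fin 6 → T, (∀ i, p i ≠ q i) → f p ≠ f q)
    (hdagger : ∀ x y z u v w : T,
      (f ![x, y, x, z, y, z] = f ![u, v, u, w, v, w] ↔
        f ![y, x, z, x, z, y] = f ![v, u, w, u, w, v]))
    (x y z w u v : T)
    (hxy : x < y) (hxz : x < z) (hyw : y < w) (hzw : z < w)
    (hyu : y < u) (hyv : y < v) (huw : u < w) (hvw : v < w)
    (hyz : y ⊓ z = x) (huv : u ⊓ v = y) :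
    ∃ a b c : T, a < b ∧ b < c ∧
      (f ![b, a, b, a, a, a] ≠ f ![c, a, c, a, a, a] ∨
       f ![a, b, a, a, b, a] ≠ f ![a, c, a, a, c, a]) := by
  by_contra hcon
  push Not at hcon
  have hf : FlatOnChains f := hcon
  have h₁ : IsDiamond x y z w := ⟨hxy, hxz, hyw, hzw, hyz⟩
  have h₂ : IsDiamond y u v w := ⟨hyu, hyv, huw, hvw, huv⟩
  refine hne ![x, x, z, y, x, x] ![y, z, x, x, z, y] ?_ ?_
  · intro i
    fin_cases i <;> simp [hxy.ne, hxz.ne, hxy.ne', hxz.ne']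
  · exact (hf.map_const_eq_left hinf hdagger h₁ h₂).symm.trans
      (hf.map_const_eq_right hinf hdagger h₁ h₂)
end
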